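/- Let 0 ≤ r ≤ r̄ and let (z, x) be a best approximation pair between B(r) = {w : ‖w‖₁ ≤ r} and M, i.e. ‖z‖₁ ≤ r, x ∈ M, and ‖z − x‖₂ ≤ ‖w − y‖₂ for all w ∈ B(r) and y ∈ M. Then r + ‖z − x‖₂ ≤ r̄. -/

import Mathlib

open Filter Topology

/-- The ℓ¹-norm on ℝⁿ. -/
noncomputable def norm1 {n : ℕ} (x : EuclideanSpace ℝ (Fin n)) : ℝ := ∑ i, |x i|

lemma norm1_nonneg {n : ℕ} (x : EuclideanSpace ℝ (Fin n)) : 0 ≤ norm1 x :=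
  Finset.sum_nonneg fun i _ => abs_nonneg _

lemma norm_le_norm1 {n : ℕ} (x : EuclideanSpace ℝ (Fin n)) : ‖x‖ ≤ norm1 x := by
  rw [EuclideanSpace.norm_eq, norm1]
  have h0 : 0 ≤ ∑ i, |x i| := Finset.sum_nonneg fun i _ => abs_nonneg _
  have hsq : ∑ i, |x i| ^ 2 ≤ (∑ i, |x i|) ^ 2 := by
    rw [sq (∑ i, |x i|), Finset.sum_mul]
    apply Finset.sum_le_sum
    intro i _
    rw [sq]
    exact mul_le_mul_of_nonneg_left
      (Finset.single_le_sum (fun j _ => abs_nonneg (x j)) (Finset.mem_univ i)) (abs_nonneg _)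
  calc Real.sqrt (∑ i, ‖x i‖ ^ 2) ≤ Real.sqrt ((∑ i, |x i|) ^ 2) :=
        Real.sqrt_le_sqrt (by simpa [Real.norm_eq_abs] using hsq)
    _ = ∑ i, |x i| := Real.sqrt_sq h0

lemma norm1_smul {n : ℕ} (c : ℝ) (x : EuclideanSpace ℝ (Fin n)) :
    norm1 (c • x) = |c| * norm1 x := by
  simp [norm1, abs_mul, Finset.mul_sum]

/-- If 0 ≤ r ≤ r̄ and (z, x) is a best approximation pair between
B(r) and M, then r + ‖z − x‖₂ ≤ r̄. -/
theorem bpmap_radius_update_bound {n m : ℕ} (hn : 1 ≤ n)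
    (A : Matrix (Fin m) (Fin n) ℝ) (b : Fin m → ℝ)
    (M : Set (EuclideanSpace ℝ (Fin n)))
    (hM : M = {x : EuclideanSpace ℝ (Fin n) | A.mulVec (WithLp.ofLp x) = b})
    (hMne : M.Nonempty)
    (rbar : ℝ) (hrbar : rbar = sInf (norm1 '' M))
    (r : ℝ) (hr0 : 0 ≤ r) (hrle : r ≤ rbar)
    (z x : EuclideanSpace ℝ (Fin n))
    (hzB : norm1 z ≤ r) (hxM : x ∈ M)
    (hbap : ∀ w : EuclideanSpace ℝ (Fin n), norm1 w ≤ r → ∀ y ∈ M, dist z x ≤ dist w y) :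
    r + dist z x ≤ rbar := by
  have key : ∀ ε > (0:ℝ), r + dist z x ≤ rbar + ε := by
    intro ε hε
    -- pick x* ∈ M with norm1 x* < rbar + ε
    obtain ⟨s, ⟨xs, hxsM, hxs⟩, hslt⟩ :=
      Real.lt_sInf_add_pos (hMne.image norm1) hε
    rw [← hrbar] at hslt
    rw [← hxs] at hslt
    by_cases hcase : norm1 xs ≤ r
    · have h0 : dist z x ≤ 0 := by
        have := hbap xs hcase xs hxsM
        simpa using this
      have : dist z x = 0 := le_antisymm h0 dist_nonneg
      rw [this]
      linarith
    · push_neg at hcase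
      have hN : 0 < norm1 xs := lt_of_le_of_lt hr0 hcase
      set c := r / norm1 xs with hc
      have hc0 : 0 ≤ c := div_nonneg hr0 hN.le
      have hc1 : c ≤ 1 := (div_le_one hN).2 hcase.le
      have hw1 : norm1 (c • xs) ≤ r := by
        rw [norm1_smul, abs_of_nonneg hc0, hc, div_mul_cancel₀ _ hN.ne']
      have hd : dist (c • xs) xs ≤ norm1 xs - r := by
        have : c • xs - xs = (c - 1) • xs := by
          rw [sub_smul, one_smul]
        rw [dist_eq_norm, this, norm_smul, Real.norm_eq_abs,
          abs_of_nonpos (by linarith)]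
        have h2 : ‖xs‖ ≤ norm1 xs := norm_le_norm1 xs
        have h3 : -(c - 1) * ‖xs‖ ≤ (1 - c) * norm1 xs := by
          have : (0:ℝ) ≤ 1 - c := by linarith
          nlinarith
        have h4 : (1 - c) * norm1 xs = norm1 xs - r := by
          rw [hc, sub_mul, one_mul, div_mul_cancel₀ _ hN.ne']
        linarith
      have := hbap (c • xs) hw1 xs hxsM
      linarith
  exact le_of_forall_pos_le_add key
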